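/- arXiv:2410.21829 — 5 statements merged into one kernel-verified Lean document; each statement's English description precedes it below -/
import Mathlib

section
/- Let X, Y ∈ ℝ^{m×r} with range(X) = range(Y). Then the oblique projector P = X (Yᵀ X)⁺ Yᵀ equals the orthogonal projector X (Xᵀ X)⁺ Xᵀ; in particular P is symmetric and idempotent. -/
open Matrix

/-- The four Penrose conditions: `Ap` is the Moore–Penrose pseudoinverse of `A`. -/
def IsMoorePenrose {m n : Type*} [Fintype m] [Fintype n]
    (A : Matrix m n ℝ) (Ap : Matrix n m ℝ) : Prop :=
  A * Ap * A = A ∧ Ap * A * Ap = Ap ∧ (A * Ap)ᵀ = A * Ap ∧ (Ap * A)ᵀ = Ap * A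

/-- Spectral (operator) norm of a real matrix, induced by the Euclidean norms. -/
noncomputable def specNorm {m n : Type*} [Fintype m] [Fintype n] [DecidableEq n]
    (A : Matrix m n ℝ) : ℝ :=
  ‖LinearMap.toContinuousLinearMap (Matrix.toEuclideanLin A)‖

/-- Frobenius norm of a real matrix. -/
noncomputable def frobNorm {m n : Type*} [Fintype m] [Fintype n]
    (A : Matrix m n ℝ) : ℝ :=
  Real.sqrt (∑ i, ∑ j, (A i j) ^ 2)

/-!
Since `X = Y B` and `Y = X A`, cancelling `XᵀX` in the Penrose identity `C C⁺ C = C` shows that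
`P = X (YᵀX)⁺ Yᵀ` fixes the columns of both `X` and `Y`, and so does `Q = X (XᵀX)⁺ Xᵀ`.
A matrix `P = X K Zᵀ` with `P Z = Z` satisfies `P = P Pᵀ`, hence is symmetric. Two symmetric
matrices with `P Q = Q` and `Q P = P` coincide, since `P = Pᵀ = (Q P)ᵀ = P Q = Q`.
-/

namespace Matrix

variable {m n p : Type*}

lemma exists_eq_mul_of_range_mulVecLin_le {R : Type*} [CommSemiring R] [Fintype n] [Fintype p]
    [DecidableEq n] {X : Matrix m n R} {Y : Matrix m p R}
    (h : LinearMap.range X.mulVecLin ≤ LinearMap.range Y.mulVecLin) :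
    ∃ B : Matrix p n R, X = Y * B := by
  have hcol : ∀ j, ∃ v, Y *ᵥ v = X.col j := fun j =>
    h ⟨Pi.single j 1, mulVec_single_one X j⟩
  choose b hb using hcol
  refine ⟨(of b)ᵀ, ext fun i j => ?_⟩
  rw [← col_apply X j i, ← hb j]
  rfl

lemma mul_mul_transpose_mul_eq_of_eq_mul [Fintype m] [Fintype n] [Fintype p] [DecidableEq n]
    {X : Matrix m n ℝ} {Y : Matrix m p ℝ} {B : Matrix p n ℝ} {G : Matrix n p ℝ}
    (hB : X = Y * B) (hG : Yᵀ * X * G * (Yᵀ * X) = Yᵀ * X) : X * G * Yᵀ * X = X := by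
  have hXt : Xᵀ = Bᵀ * Yᵀ := by rw [hB, transpose_mul]
  have hgram : Xᵀ * X * (G * Yᵀ * X - 1) = 0 := by
    calc Xᵀ * X * (G * Yᵀ * X - 1) = Bᵀ * (Yᵀ * X * G * (Yᵀ * X)) - Xᵀ * X := by
          rw [Matrix.mul_sub, Matrix.mul_one, hXt]; simp only [Matrix.mul_assoc]
      _ = 0 := by rw [hG, hXt, Matrix.mul_assoc, sub_self]
  rw [← conjTranspose_eq_transpose_of_trivial, conjTranspose_mul_self_mul_eq_zero,
    Matrix.mul_sub, Matrix.mul_one, sub_eq_zero] at hgram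
  simpa only [Matrix.mul_assoc] using hgram

lemma transpose_eq_self_of_eq_mul_mul_transpose {R : Type*} [CommSemiring R] [Fintype m]
    [Fintype n] [Fintype p] {P : Matrix m m R} {X : Matrix m n R} {K : Matrix n p R}
    {Z : Matrix m p R} (hP : P = X * K * Zᵀ) (hZ : P * Z = Z) : Pᵀ = P := by
  have hPP : P * Pᵀ = P := by
    calc P * Pᵀ = X * K * (P * Z)ᵀ := by rw [transpose_mul, hP, Matrix.mul_assoc]
      _ = P := by rw [hZ, hP]
  rw [← hPP, transpose_mul, transpose_transpose]

lemma eq_of_transpose_eq_self_of_mul_eq {R : Type*} [CommSemiring R] [Fintype m]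
    {P Q : Matrix m m R} (hP : Pᵀ = P) (hQ : Qᵀ = Q) (hPQ : P * Q = Q) (hQP : Q * P = P) :
    P = Q := by
  calc P = (Q * P)ᵀ := by rw [hQP, hP]
    _ = Q := by rw [transpose_mul, hP, hQ, hPQ]

end Matrix

/-- If range(X) = range(Y), then the oblique projector
X (YᵀX)⁺ Yᵀ equals the orthogonal projector X (XᵀX)⁺ Xᵀ; in particular it is
symmetric and idempotent. -/
theorem stmt2 {m r : ℕ} (X Y : Matrix (Fin m) (Fin r) ℝ)
    (hrange : LinearMap.range X.mulVecLin = LinearMap.range Y.mulVecLin)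
    (Cp : Matrix (Fin r) (Fin r) ℝ) (hCp : IsMoorePenrose (Yᵀ * X) Cp)
    (Gp : Matrix (Fin r) (Fin r) ℝ) (hGp : IsMoorePenrose (Xᵀ * X) Gp) :
    X * Cp * Yᵀ = X * Gp * Xᵀ ∧
      (X * Cp * Yᵀ)ᵀ = X * Cp * Yᵀ ∧
      (X * Cp * Yᵀ) * (X * Cp * Yᵀ) = X * Cp * Yᵀ := by
  obtain ⟨A, hA⟩ := exists_eq_mul_of_range_mulVecLin_le hrange.ge
  obtain ⟨B, hB⟩ := exists_eq_mul_of_range_mulVecLin_le hrange.le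
  have hPX : X * Cp * Yᵀ * X = X := mul_mul_transpose_mul_eq_of_eq_mul hB hCp.1
  have hQX : X * Gp * Xᵀ * X = X :=
    mul_mul_transpose_mul_eq_of_eq_mul (Matrix.mul_one X).symm hGp.1
  have hPY : X * Cp * Yᵀ * Y = Y := by
    calc X * Cp * Yᵀ * Y = X * Cp * Yᵀ * X * A := by rw [Matrix.mul_assoc _ X A, ← hA]
      _ = Y := by rw [hPX, ← hA]
  have hPQ : X * Cp * Yᵀ * (X * Gp * Xᵀ) = X * Gp * Xᵀ := by
    simp only [← Matrix.mul_assoc, hPX]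
  have hQP : X * Gp * Xᵀ * (X * Cp * Yᵀ) = X * Cp * Yᵀ := by
    simp only [← Matrix.mul_assoc, hQX]
  have hPP : X * Cp * Yᵀ * (X * Cp * Yᵀ) = X * Cp * Yᵀ := by
    simp only [← Matrix.mul_assoc, hPX]
  have hPsymm := transpose_eq_self_of_eq_mul_mul_transpose rfl hPY
  have hQsymm := transpose_eq_self_of_eq_mul_mul_transpose rfl hQX
  exact ⟨eq_of_transpose_eq_self_of_mul_eq hPsymm hQsymm hPQ hQP, hPsymm, hPP⟩
end

section
/- Let P be a real n×n matrix with P² = P and P ≠ 0 and P ≠ I. Then the operator (spectral) norm satisfies ‖I − P‖₂ = ‖P‖₂. -/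
/-!
Write `x = u + w` with `u = P x` in the range and `w = x - P x` in the kernel of `P`. Rescaling
`u` and `w` reciprocally so that their lengths are swapped leaves the cross term `⟪u, w⟫`, hence
`‖u + w‖`, unchanged, and `P` maps the rescaled vector to one of length `‖w‖`; therefore
`‖(I - P) x‖ ≤ ‖P‖ ‖x‖`. (When `P x = 0` use `‖P‖ ≥ 1` instead.) Since `I - P` is again a
nontrivial idempotent, the reverse inequality follows by symmetry.
-/

open Matrix

theorem IsIdempotentElem.one_le_norm {R : Type*} [NonUnitalNormedRing R] {p : R}
    (hp : IsIdempotentElem p) (hp0 : p ≠ 0) : 1 ≤ ‖p‖ := by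
  have hpos : 0 < ‖p‖ := norm_pos_iff.mpr hp0
  have : ‖p‖ * 1 ≤ ‖p‖ * ‖p‖ := by
    simpa [hp.eq] using norm_mul_le p p
  exact le_of_mul_le_mul_left this hpos

section InnerProductSpace

variable {E : Type*} [NormedAddCommGroup E] [InnerProductSpace ℝ E]

theorem norm_div_smul_add_div_smul_eq_norm_add {u w : E} (hu : u ≠ 0) (hw : w ≠ 0) :
    ‖(‖w‖ / ‖u‖) • u + (‖u‖ / ‖w‖) • w‖ = ‖u + w‖ := by
  have hu' : ‖u‖ ≠ 0 := norm_ne_zero_iff.mpr hu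
  have hw' : ‖w‖ ≠ 0 := norm_ne_zero_iff.mpr hw
  rw [← sq_eq_sq₀ (norm_nonneg _) (norm_nonneg _), norm_add_sq_real, norm_add_sq_real,
    real_inner_smul_left, real_inner_smul_right, norm_smul, norm_smul, Real.norm_eq_abs,
    Real.norm_eq_abs, abs_div, abs_div, abs_norm, abs_norm]
  field_simp
  ring

namespace ContinuousLinearMap

theorem norm_sub_apply_le_of_isIdempotentElem {f : E →L[ℝ] E} (hf : IsIdempotentElem f)
    (hf0 : f ≠ 0) (x : E) : ‖x - f x‖ ≤ ‖f‖ * ‖x‖ := by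
  set u := f x
  set w := x - f x
  have hfu : f u = u := congr($hf.eq x)
  have hfw : f w = 0 := by rw [map_sub, hfu, sub_self]
  rcases eq_or_ne w 0 with hw | hw
  · rw [hw, norm_zero]
    positivity
  rcases eq_or_ne u 0 with hu | hu
  · have hxw : x = w := by rw [← sub_zero x, ← hu]
    rw [← hxw]
    exact le_mul_of_one_le_left (norm_nonneg x) (hf.one_le_norm hf0)
  set v := (‖w‖ / ‖u‖) • u + (‖u‖ / ‖w‖) • w
  have hfv : f v = (‖w‖ / ‖u‖) • u := by
    rw [map_add, map_smul, map_smul, hfu, hfw, smul_zero, add_zero]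
  calc ‖w‖ = ‖f v‖ := by
        rw [hfv, norm_smul, Real.norm_of_nonneg (by positivity),
          div_mul_cancel₀ _ (norm_ne_zero_iff.mpr hu)]
    _ ≤ ‖f‖ * ‖v‖ := f.le_opNorm v
    _ = ‖f‖ * ‖x‖ := by rw [norm_div_smul_add_div_smul_eq_norm_add hu hw, add_sub_cancel u x]

theorem norm_one_sub_le_of_isIdempotentElem {f : E →L[ℝ] E} (hf : IsIdempotentElem f)
    (hf0 : f ≠ 0) : ‖1 - f‖ ≤ ‖f‖ :=
  (1 - f).opNorm_le_bound (norm_nonneg f) (norm_sub_apply_le_of_isIdempotentElem hf hf0)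

theorem norm_one_sub_eq_of_isIdempotentElem {f : E →L[ℝ] E} (hf : IsIdempotentElem f)
    (hf0 : f ≠ 0) (hf1 : f ≠ 1) : ‖1 - f‖ = ‖f‖ := by
  refine le_antisymm (norm_one_sub_le_of_isIdempotentElem hf hf0) ?_
  simpa using norm_one_sub_le_of_isIdempotentElem hf.one_sub (sub_ne_zero.mpr hf1.symm)

end ContinuousLinearMap

end InnerProductSpace

theorem specNorm_eq_norm_toEuclideanCLM {n : Type*} [Fintype n] [DecidableEq n]
    (A : Matrix n n ℝ) : specNorm A = ‖toEuclideanCLM (𝕜 := ℝ) A‖ := rfl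

/-- For an idempotent real n×n matrix P with P ≠ 0 and P ≠ I,
the spectral norm satisfies ‖I − P‖₂ = ‖P‖₂. -/
theorem stmt3 {n : ℕ} (P : Matrix (Fin n) (Fin n) ℝ)
    (hidem : P * P = P) (h0 : P ≠ 0) (h1 : P ≠ 1) :
    specNorm ((1 : Matrix (Fin n) (Fin n) ℝ) - P) = specNorm P := by
  have hf : IsIdempotentElem (toEuclideanCLM (𝕜 := ℝ) P) := by
    rw [IsIdempotentElem, ← map_mul, hidem]
  rw [specNorm_eq_norm_toEuclideanCLM, specNorm_eq_norm_toEuclideanCLM, map_sub, map_one]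
  exact ContinuousLinearMap.norm_one_sub_eq_of_isIdempotentElem hf
    ((map_ne_zero_iff _ toEuclideanCLM.injective).mpr h0)
    (by simpa using toEuclideanCLM.injective.ne h1)
end

section
/- Let P be a symmetric idempotent real m×m matrix (orthogonal projector) and V an m×n real matrix. Then for every natural number q ≥ 0, ‖P V‖₂ ≤ ‖P (V Vᵀ)^q V‖₂^{1/(2q+1)}, where ‖·‖₂ is the spectral norm. -/
open Matrix

private lemma dot_self_nonneg' {k : ℕ} (v : Fin k → ℝ) : 0 ≤ v ⬝ᵥ v :=
  Finset.sum_nonneg fun _ _ => mul_self_nonneg _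

private lemma dot_cs {k : ℕ} (u v : Fin k → ℝ) : (u ⬝ᵥ v) ^ 2 ≤ (u ⬝ᵥ u) * (v ⬝ᵥ v) := by
  simpa [dotProduct, sq] using Finset.sum_mul_sq_le_sq_mul_sq Finset.univ u v

private lemma mulVec3 {k l p r : ℕ} (A : Matrix (Fin k) (Fin l) ℝ) (B : Matrix (Fin l) (Fin p) ℝ)
    (C : Matrix (Fin p) (Fin r) ℝ) (x : Fin r → ℝ) :
    A *ᵥ (B *ᵥ (C *ᵥ x)) = (A * B * C) *ᵥ x := by
  rw [mulVec_mulVec, mulVec_mulVec]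

private lemma specNorm_nonneg' {m n : ℕ} (A : Matrix (Fin m) (Fin n) ℝ) : 0 ≤ specNorm A :=
  norm_nonneg _

private lemma norm_symm_sq {k : ℕ} (v : Fin k → ℝ) :
    ‖(WithLp.equiv 2 (Fin k → ℝ)).symm v‖ ^ 2 = v ⬝ᵥ v := by
  rw [EuclideanSpace.norm_eq, Real.sq_sqrt (by positivity)]
  simp [dotProduct, Real.norm_eq_abs, sq_abs, sq]

private lemma dot_mulVec_le {m n : ℕ} (A : Matrix (Fin m) (Fin n) ℝ) (x : Fin n → ℝ) :
    (A *ᵥ x) ⬝ᵥ (A *ᵥ x) ≤ specNorm A ^ 2 * (x ⬝ᵥ x) := by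
  have h := (LinearMap.toContinuousLinearMap (Matrix.toEuclideanLin A)).le_opNorm
    ((WithLp.equiv 2 (Fin n → ℝ)).symm x)
  have happ : (LinearMap.toContinuousLinearMap (Matrix.toEuclideanLin A))
      ((WithLp.equiv 2 (Fin n → ℝ)).symm x) = (WithLp.equiv 2 (Fin m → ℝ)).symm (A *ᵥ x) := by
    simp
  rw [happ] at h
  have h2 := pow_le_pow_left₀ (norm_nonneg _) h 2
  rw [mul_pow, norm_symm_sq, norm_symm_sq] at h2
  exact h2

private lemma specNorm_le_of {m n : ℕ} (A : Matrix (Fin m) (Fin n) ℝ) (c : ℝ) (hc : 0 ≤ c)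
    (h : ∀ x : Fin n → ℝ, (A *ᵥ x) ⬝ᵥ (A *ᵥ x) ≤ c ^ 2 * (x ⬝ᵥ x)) : specNorm A ≤ c := by
  apply ContinuousLinearMap.opNorm_le_bound _ hc
  intro y
  set x : Fin n → ℝ := WithLp.equiv 2 (Fin n → ℝ) y with hx
  have hy : y = (WithLp.equiv 2 (Fin n → ℝ)).symm x := by simp [hx]
  have happ : (LinearMap.toContinuousLinearMap (Matrix.toEuclideanLin A)) y
      = (WithLp.equiv 2 (Fin m → ℝ)).symm (A *ᵥ x) := by
    rw [hy]; simp
  rw [happ]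
  have h1 : ‖(WithLp.equiv 2 (Fin m → ℝ)).symm (A *ᵥ x)‖ ^ 2 ≤ (c * ‖y‖) ^ 2 := by
    rw [norm_symm_sq, mul_pow]
    calc (A *ᵥ x) ⬝ᵥ (A *ᵥ x) ≤ c ^ 2 * (x ⬝ᵥ x) := h x
    _ = c ^ 2 * ‖y‖ ^ 2 := by rw [hy, norm_symm_sq]
  exact le_of_pow_le_pow_left₀ two_ne_zero (by positivity) h1

private lemma specNorm_transpose_le {m n : ℕ} (A : Matrix (Fin m) (Fin n) ℝ) :
    specNorm Aᵀ ≤ specNorm A := by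
  apply specNorm_le_of _ _ (specNorm_nonneg' A)
  intro x
  have h1 : (Aᵀ *ᵥ x) ⬝ᵥ (Aᵀ *ᵥ x) = x ⬝ᵥ (A *ᵥ (Aᵀ *ᵥ x)) := by
    conv_rhs => rw [dotProduct_mulVec, ← mulVec_transpose]
  have h2 := dot_cs x (A *ᵥ (Aᵀ *ᵥ x))
  have h3 := dot_mulVec_le A (Aᵀ *ᵥ x)
  have h4 := dot_self_nonneg' (Aᵀ *ᵥ x)
  have h5 := dot_self_nonneg' x
  rcases eq_or_lt_of_le h4 with h0 | h0
  · rw [← h0]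
    exact mul_nonneg (sq_nonneg _) h5
  · nlinarith [dot_self_nonneg' (A *ᵥ (Aᵀ *ᵥ x))]

private lemma specNorm_transpose {m n : ℕ} (A : Matrix (Fin m) (Fin n) ℝ) :
    specNorm Aᵀ = specNorm A := by
  refine le_antisymm (specNorm_transpose_le A) ?_
  have := specNorm_transpose_le Aᵀ
  rwa [transpose_transpose] at this

private lemma proj_dot_le {m : ℕ} (P : Matrix (Fin m) (Fin m) ℝ)
    (hsymm : Pᵀ = P) (hidem : P * P = P) (x : Fin m → ℝ) :
    (P *ᵥ x) ⬝ᵥ (P *ᵥ x) ≤ x ⬝ᵥ x := by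
  set y : Fin m → ℝ := P *ᵥ x with hy
  have hPy : P *ᵥ y = y := by rw [hy, mulVec_mulVec, hidem]
  have h1 : y ⬝ᵥ y = x ⬝ᵥ y := by
    nth_rewrite 1 [hy]
    rw [← hsymm, mulVec_transpose, ← dotProduct_mulVec, hPy]
  have h2 := dot_cs x y
  have h4 := dot_self_nonneg' y
  have h5 := dot_self_nonneg' x
  rcases eq_or_lt_of_le h4 with h0 | h0
  · rw [← h0]; exact h5
  · nlinarith

private lemma chain (a : ℕ → ℝ) (hnn : ∀ l, 0 ≤ a l)
    (hcs : ∀ l, a (l + 1) ^ 2 ≤ a l * a (l + 2)) (k : ℕ) :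
    a 1 ^ (k + 1) ≤ a 0 ^ k * a (k + 1) := by
  rcases eq_or_lt_of_le (hnn 1) with h1 | h1
  · calc a 1 ^ (k+1) = 0 := by rw [← h1]; simp
    _ ≤ a 0 ^ k * a (k+1) := mul_nonneg (pow_nonneg (hnn 0) k) (hnn _)
  · have hpos : ∀ l, 0 < a l ∧ 0 < a (l + 1) := by
      intro l
      induction l with
      | zero =>
        refine ⟨?_, h1⟩
        rcases eq_or_lt_of_le (hnn 0) with h0 | h0
        · exfalso; nlinarith [hcs 0, hnn 2]
        · exact h0
      | succ l ih => exact ⟨ih.2, by nlinarith [hcs l, ih.1, ih.2]⟩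
    have ratio : ∀ l, a 1 * a l ≤ a 0 * a (l + 1) := by
      intro l
      induction l with
      | zero => rw [mul_comm]
      | succ l ih =>
        have h := hcs l
        have p0 := (hpos 0).1
        have pl := (hpos l).1
        have pl1 := (hpos l).2
        nlinarith [mul_le_mul_of_nonneg_right ih (le_of_lt pl1)]
    induction k with
    | zero => simp
    | succ k ih =>
      calc a 1 ^ (k + 2) = a 1 ^ (k + 1) * a 1 := by ring
      _ ≤ (a 0 ^ k * a (k + 1)) * a 1 := mul_le_mul_of_nonneg_right ih (le_of_lt h1)
      _ = a 0 ^ k * (a 1 * a (k + 1)) := by ring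
      _ ≤ a 0 ^ k * (a 0 * a (k + 2)) :=
          mul_le_mul_of_nonneg_left (ratio (k + 1)) (pow_nonneg (hnn 0) k)
      _ = a 0 ^ (k + 1) * a (k + 2) := by ring

/-- For a symmetric idempotent P (orthogonal projector) and any
V, ‖PV‖₂ ≤ ‖P (VVᵀ)^q V‖₂^{1/(2q+1)} for every natural number q. -/
theorem stmt11 {m n : ℕ} (P : Matrix (Fin m) (Fin m) ℝ)
    (hsymm : Pᵀ = P) (hidem : P * P = P)
    (V : Matrix (Fin m) (Fin n) ℝ) (q : ℕ) :
    specNorm (P * V) ≤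
      specNorm (P * (V * Vᵀ) ^ q * V) ^ ((1 : ℝ) / (2 * (q : ℝ) + 1)) := by
  set N := specNorm (P * (V * Vᵀ) ^ q * V) with hN
  have hN0 : 0 ≤ N := specNorm_nonneg' _
  set c : ℝ := N ^ ((1 : ℝ) / (2 * (q : ℝ) + 1)) with hc
  have hc0 : 0 ≤ c := Real.rpow_nonneg hN0 _
  have hck : c ^ (2 * q + 1) = N := by
    rw [hc, ← Real.rpow_natCast (N ^ ((1 : ℝ) / (2 * (q : ℝ) + 1))) (2 * q + 1),
      ← Real.rpow_mul hN0]
    have : (1 : ℝ) / (2 * (q : ℝ) + 1) * ((2 * q + 1 : ℕ) : ℝ) = 1 := by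
      have hq : (2 * (q : ℝ) + 1) ≠ 0 := by positivity
      push_cast
      field_simp
    rw [this, Real.rpow_one]
  have hPVt : (P * V)ᵀ = Vᵀ * P := by rw [transpose_mul, hsymm]
  have htr : specNorm (P * V) = specNorm (Vᵀ * P) := by
    rw [← hPVt, specNorm_transpose]
  rw [htr]
  apply specNorm_le_of _ _ hc0
  intro x
  set y : Fin m → ℝ := P *ᵥ x with hy
  set w : ℕ → (Fin m → ℝ) := fun j => ((V * Vᵀ) ^ j) *ᵥ y with hw
  have hw0 : w 0 = y := by simp [hw]
  have hwsucc : ∀ j, w (j + 1) = V *ᵥ (Vᵀ *ᵥ w j) := by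
    intro j
    show ((V * Vᵀ) ^ (j + 1)) *ᵥ y = V *ᵥ (Vᵀ *ᵥ (((V * Vᵀ) ^ j) *ᵥ y))
    rw [mulVec3, pow_succ']
  set a : ℕ → ℝ := fun l => if l % 2 = 0 then (w (l / 2)) ⬝ᵥ (w (l / 2))
      else (Vᵀ *ᵥ w (l / 2)) ⬝ᵥ (Vᵀ *ᵥ w (l / 2)) with ha
  have haeven : ∀ j, a (2 * j) = w j ⬝ᵥ w j := by
    intro j
    have h1 : (2 * j) % 2 = 0 := by omega
    have h2 : 2 * j / 2 = j := by omega
    simp [ha, h1, h2]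
  have haodd : ∀ j, a (2 * j + 1) = (Vᵀ *ᵥ w j) ⬝ᵥ (Vᵀ *ᵥ w j) := by
    intro j
    have h1 : (2 * j + 1) % 2 ≠ 0 := by omega
    have h2 : (2 * j + 1) / 2 = j := by omega
    simp [ha, h1, h2]
  have hnn : ∀ l, 0 ≤ a l := by
    intro l
    rw [ha]
    dsimp only
    split <;> exact dot_self_nonneg' _
  have hcs : ∀ l, a (l + 1) ^ 2 ≤ a l * a (l + 2) := by
    intro l
    rcases Nat.even_or_odd l with ⟨j, hj⟩ | ⟨j, hj⟩
    · subst hj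
      rw [show j + j + 1 = 2 * j + 1 by ring, show j + j = 2 * j by ring,
        show 2 * j + 2 = 2 * (j + 1) by ring, haodd, haeven, haeven]
      have key : (Vᵀ *ᵥ w j) ⬝ᵥ (Vᵀ *ᵥ w j) = w j ⬝ᵥ w (j + 1) := by
        nth_rewrite 1 [mulVec_transpose]
        rw [← dotProduct_mulVec, ← hwsucc j]
      rw [key]
      exact dot_cs _ _
    · subst hj
      rw [show 2 * j + 1 + 1 = 2 * (j + 1) by ring, show 2 * j + 1 + 2 = 2 * (j + 1) + 1 by ring,
        haeven, haodd, haodd]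
      have key : w (j + 1) ⬝ᵥ w (j + 1) = (Vᵀ *ᵥ w j) ⬝ᵥ (Vᵀ *ᵥ w (j + 1)) := by
        calc w (j + 1) ⬝ᵥ w (j + 1) = w (j + 1) ⬝ᵥ (V *ᵥ (Vᵀ *ᵥ w j)) := by rw [← hwsucc]
        _ = (w (j + 1) ᵥ* V) ⬝ᵥ (Vᵀ *ᵥ w j) := dotProduct_mulVec _ _ _
        _ = (Vᵀ *ᵥ w (j + 1)) ⬝ᵥ (Vᵀ *ᵥ w j) := by conv_rhs => rw [mulVec_transpose]
        _ = (Vᵀ *ᵥ w j) ⬝ᵥ (Vᵀ *ᵥ w (j + 1)) := dotProduct_comm _ _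
      rw [key]
      exact dot_cs _ _
  have hmain := chain a hnn hcs (2 * q)
  have ha1 : a 1 = ((Vᵀ * P) *ᵥ x) ⬝ᵥ ((Vᵀ * P) *ᵥ x) := by
    have h := haodd 0
    rw [hw0] at h
    simp only [Nat.mul_zero, Nat.zero_add] at h
    rw [h, hy, mulVec_mulVec]
  have ha0 : a 0 ≤ x ⬝ᵥ x := by
    have h := haeven 0
    simp only [Nat.mul_zero] at h
    rw [h, hw0, hy]
    exact proj_dot_le P hsymm hidem x
  have hatop : a (2 * q + 1) ≤ N ^ 2 * (x ⬝ᵥ x) := by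
    rw [haodd q]
    have hT : (P * (V * Vᵀ) ^ q * V)ᵀ = Vᵀ * ((V * Vᵀ) ^ q * P) := by
      rw [transpose_mul, transpose_mul, transpose_pow, transpose_mul, transpose_transpose,
        hsymm]
    have hM : Vᵀ *ᵥ w q = ((P * (V * Vᵀ) ^ q * V)ᵀ) *ᵥ x := by
      rw [hT]
      show Vᵀ *ᵥ (((V * Vᵀ) ^ q) *ᵥ (P *ᵥ x)) = (Vᵀ * ((V * Vᵀ) ^ q * P)) *ᵥ x
      rw [mulVec3, Matrix.mul_assoc]
    rw [hM]
    have h := dot_mulVec_le ((P * (V * Vᵀ) ^ q * V)ᵀ) x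
    rwa [specNorm_transpose, ← hN] at h
  have hx0 : 0 ≤ x ⬝ᵥ x := dot_self_nonneg' x
  have h1 : (((Vᵀ * P) *ᵥ x) ⬝ᵥ ((Vᵀ * P) *ᵥ x)) ^ (2 * q + 1)
      ≤ (c ^ 2 * (x ⬝ᵥ x)) ^ (2 * q + 1) := by
    have hpow : (c ^ 2) ^ (2 * q + 1) = N ^ 2 := by
      rw [← pow_mul, mul_comm 2 (2 * q + 1), pow_mul, hck]
    calc (((Vᵀ * P) *ᵥ x) ⬝ᵥ ((Vᵀ * P) *ᵥ x)) ^ (2 * q + 1) = a 1 ^ (2 * q + 1) := by rw [ha1]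
    _ ≤ a 0 ^ (2 * q) * a (2 * q + 1) := hmain
    _ ≤ (x ⬝ᵥ x) ^ (2 * q) * (N ^ 2 * (x ⬝ᵥ x)) := by
        apply mul_le_mul (pow_le_pow_left₀ (hnn 0) ha0 _) hatop (hnn _)
        positivity
    _ = (c ^ 2 * (x ⬝ᵥ x)) ^ (2 * q + 1) := by rw [mul_pow, hpow]; ring
  exact le_of_pow_le_pow_left₀ (by omega) (mul_nonneg (sq_nonneg c) hx0) h1
end

section
/- Let A ∈ ℝ^{m×n}, X ∈ ℝ^{n×r}, with AX = Q₁R₁ and AᵀQ₁ = Q̂R̂ economy-size QR factorizations (Q₁, Q̂ having orthonormal columns). If R₁ has full row rank (so R₁R₁⁺ = I), then AX (Q₁ᵀ A X)⁺ (AᵀQ₁)ᵀ = Q₁ R̂ᵀ Q̂ᵀ. -/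
open Matrix

/-- With AX = Q₁R₁ and AᵀQ₁ = Q̂R̂ economy-size QR factorizations
and R₁ of full row rank (equivalently Q₁ᵀAX of full row rank, i.e.
(Q₁ᵀAX)(Q₁ᵀAX)⁺ = I), we have AX (Q₁ᵀAX)⁺ (AᵀQ₁)ᵀ = Q₁ R̂ᵀ Q̂ᵀ. -/
theorem stmt14 {m n r : ℕ} (A : Matrix (Fin m) (Fin n) ℝ)
    (X : Matrix (Fin n) (Fin r) ℝ)
    (Q1 : Matrix (Fin m) (Fin r) ℝ) (R1 : Matrix (Fin r) (Fin r) ℝ)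
    (hQ1 : Q1ᵀ * Q1 = 1) (hQR1 : A * X = Q1 * R1)
    (Qh : Matrix (Fin n) (Fin r) ℝ) (Rh : Matrix (Fin r) (Fin r) ℝ)
    (hQh : Qhᵀ * Qh = 1) (hQR2 : Aᵀ * Q1 = Qh * Rh)
    (Cp : Matrix (Fin r) (Fin r) ℝ) (hCp : IsMoorePenrose (Q1ᵀ * A * X) Cp)
    (hfull : (Q1ᵀ * A * X) * Cp = 1) :
    A * X * Cp * (Aᵀ * Q1)ᵀ = Q1 * Rhᵀ * Qhᵀ := by
  have h1 : Q1ᵀ * A * X = R1 := by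
    rw [Matrix.mul_assoc, hQR1, ← Matrix.mul_assoc, hQ1, Matrix.one_mul]
  have h2 : A * X * Cp = Q1 := by
    calc A * X * Cp = Q1 * (R1 * Cp) := by rw [hQR1, Matrix.mul_assoc]
    _ = Q1 * ((Q1ᵀ * A * X) * Cp) := by rw [h1]
    _ = Q1 := by rw [hfull, Matrix.mul_one]
  rw [h2, hQR2, Matrix.transpose_mul, ← Matrix.mul_assoc]
end

section
/- Let A ∈ ℝ^{m×n}, X ∈ ℝ^{n×r}, let Q₁ be an orthonormal basis of range(AX) and Q̂ an orthonormal basis of range(AᵀQ₁) = range(Aᵀ A X). Then the GN-c projector P = Q̂ (Q₁ᵀ A Q̂)⁺ (Aᵀ Q₁)ᵀ equals the orthogonal projector Q̂ Q̂ᵀ onto range(Q̂); in particular, the GN-c approximation satisfies A Q̂ (Q₁ᵀAQ̂)⁺ (AᵀQ₁)ᵀ = A Q̂ Q̂ᵀ. -/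
open Matrix

/-- If Q₁ is an orthonormal basis of range(AX) and Q̂ an
orthonormal basis of range(AᵀQ₁) (both of full column rank r), the GN-c
projector Q̂ (Q₁ᵀAQ̂)⁺ (AᵀQ₁)ᵀ equals the orthogonal projector Q̂Q̂ᵀ; in
particular A Q̂ (Q₁ᵀAQ̂)⁺ (AᵀQ₁)ᵀ = A Q̂ Q̂ᵀ. -/
theorem stmt15 {m n r : ℕ} (A : Matrix (Fin m) (Fin n) ℝ)
    (X : Matrix (Fin n) (Fin r) ℝ)
    (hrank1 : (A * X).rank = r) (Q1 : Matrix (Fin m) (Fin r) ℝ)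
    (hQ1 : Q1ᵀ * Q1 = 1)
    (hrange1 : LinearMap.range (A * X).mulVecLin =
      LinearMap.range Q1.mulVecLin)
    (hrank2 : (Aᵀ * Q1).rank = r) (Qh : Matrix (Fin n) (Fin r) ℝ)
    (hQh : Qhᵀ * Qh = 1)
    (hrange2 : LinearMap.range (Aᵀ * Q1).mulVecLin =
      LinearMap.range Qh.mulVecLin)
    (Cp : Matrix (Fin r) (Fin r) ℝ)
    (hCp : IsMoorePenrose (Q1ᵀ * A * Qh) Cp) :
    Qh * Cp * (Aᵀ * Q1)ᵀ = Qh * Qhᵀ ∧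
      A * Qh * Cp * (Aᵀ * Q1)ᵀ = A * (Qh * Qhᵀ) := by

  -- abbreviation
  set B : Matrix (Fin r) (Fin r) ℝ := Qhᵀ * (Aᵀ * Q1) with hB
  -- Step 1: Aᵀ * Q1 = Qh * B
  have hAQ : Aᵀ * Q1 = Qh * B := by
    have hcol : ∀ v : Fin r → ℝ, (Aᵀ * Q1).mulVec v = (Qh * B).mulVec v := by
      intro v
      have hmem : (Aᵀ * Q1).mulVecLin v ∈ LinearMap.range Qh.mulVecLin := by
        rw [← hrange2]; exact ⟨v, rfl⟩
      obtain ⟨x, hx⟩ := hmem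
      simp only [Matrix.mulVecLin_apply] at hx
      calc (Aᵀ * Q1).mulVec v = Qh.mulVec x := hx.symm
        _ = (Qh * (Qhᵀ * Qh)).mulVec x := by rw [hQh, Matrix.mul_one]
        _ = (Qh * Qhᵀ).mulVec (Qh.mulVec x) := by
            rw [← Matrix.mul_assoc, Matrix.mulVec_mulVec]
        _ = (Qh * Qhᵀ).mulVec ((Aᵀ * Q1).mulVec v) := by rw [hx]
        _ = (Qh * B).mulVec v := by
            rw [Matrix.mulVec_mulVec, hB, Matrix.mul_assoc]
    ext i j
    have h := congrFun (hcol (Pi.single j 1)) i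
    simpa [Matrix.mulVec_single] using h
  -- Step 2: B has full rank
  have hrkB : B.rank = r := by
    refine le_antisymm ?_ ?_
    · simpa using B.rank_le_card_width
    · calc r = (Aᵀ * Q1).rank := hrank2.symm
        _ = (Qh * B).rank := by rw [hAQ]
        _ ≤ B.rank := Matrix.rank_mul_le_right Qh B
  -- Step 3: B is a unit
  have hUnit : IsUnit B := by
    rw [← Matrix.mulVec_surjective_iff_isUnit]
    have hrange : LinearMap.range B.mulVecLin = ⊤ := by
      apply Submodule.eq_top_of_finrank_eq
      rw [← Matrix.rank, hrkB]
      simp [Module.finrank_pi]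
    intro y
    have : y ∈ LinearMap.range B.mulVecLin := by rw [hrange]; trivial
    obtain ⟨x, hx⟩ := this
    exact ⟨x, hx⟩
  -- C = Bᵀ
  have hC : Q1ᵀ * A * Qh = Bᵀ := by
    rw [hB, Matrix.transpose_mul, Matrix.transpose_mul, Matrix.transpose_transpose,
      Matrix.transpose_transpose, Matrix.mul_assoc]
  have hUnitT : IsUnit Bᵀ := (Matrix.isUnit_transpose B).mpr hUnit
  have hUnitDet : IsUnit Bᵀ.det := (Matrix.isUnit_iff_isUnit_det Bᵀ).mp hUnitT
  have hinv : Bᵀ⁻¹ * Bᵀ = 1 := Matrix.nonsing_inv_mul Bᵀ hUnitDet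
  -- Step 4: Cp * C = 1
  have hCpC : Cp * (Q1ᵀ * A * Qh) = 1 := by
    have h1 := hCp.1
    rw [hC] at h1 ⊢
    calc Cp * Bᵀ = (Bᵀ⁻¹ * Bᵀ) * (Cp * Bᵀ) := by rw [hinv, Matrix.one_mul]
      _ = Bᵀ⁻¹ * (Bᵀ * Cp * Bᵀ) := by noncomm_ring
      _ = Bᵀ⁻¹ * Bᵀ := by rw [h1]
      _ = 1 := hinv
  -- conclude
  have key : Qh * Cp * (Aᵀ * Q1)ᵀ = Qh * Qhᵀ := by
    have hT : (Aᵀ * Q1)ᵀ = Bᵀ * Qhᵀ := by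
      rw [hAQ, Matrix.transpose_mul]
    rw [hT, ← hC]
    calc Qh * Cp * (Q1ᵀ * A * Qh * Qhᵀ)
        = Qh * (Cp * (Q1ᵀ * A * Qh)) * Qhᵀ := by simp only [Matrix.mul_assoc]
      _ = Qh * Qhᵀ := by rw [hCpC, Matrix.mul_one]
  refine ⟨key, ?_⟩
  calc A * Qh * Cp * (Aᵀ * Q1)ᵀ = A * (Qh * Cp * (Aᵀ * Q1)ᵀ) := by simp only [Matrix.mul_assoc]
    _ = A * (Qh * Qhᵀ) := by rw [key]
end
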